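/- Under the same weight-separation assumption, any minimum spanning tree of G contains exactly S - 1 inter-cluster edges, where S is the number of clusters; equivalently, removing the inter-cluster edges of the MST disconnects it into exactly the S clusters. -/

import Mathlib

/-!
Cycle property: if `T` is a minimum spanning tree of `G` and `ab` is an edge of `G`, every edge
`e` on the `T`-path from `a` to `b` has `w e ≤ w ab`, since `T - e + ab` is again a spanning tree.
When `ab` is intra-cluster, weight separation therefore makes the whole `T`-path intra-cluster.
As clusters are connected in `G`, the intra-cluster part `F` of `T` has exactly the clusters as
its connected components. Being a forest, `F` has `|V| - S` edges, while `T` has `|V| - 1`; the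
remaining `S - 1` edges of `T` are its inter-cluster edges.
-/

open Finset SimpleGraph

namespace SimpleGraph

variable {V C : Type*}

theorem Walk.reachable_deleteEdges_start_or_end {G : SimpleGraph V} {p q z : V}
    (W : G.Walk z p) :
    (G.deleteEdges {s(p, q)}).Reachable z p ∨ (G.deleteEdges {s(p, q)}).Reachable z q := by
  induction W with
  | nil => exact .inl .rfl
  | @cons z y r hzy _ ih =>
    by_cases he : s(z, y) = s(r, q)
    · rcases Sym2.eq_iff.mp he with ⟨rfl, -⟩ | ⟨rfl, -⟩
      exacts [.inl .rfl, .inr .rfl]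
    · have hadj : (G.deleteEdges {s(r, q)}).Adj z y := by simp [hzy, he]
      exact ih.imp hadj.reachable.trans hadj.reachable.trans

theorem IsTree.deleteEdges_sup_edge {T : SimpleGraph V} (hT : T.IsTree) {p q a b : V}
    (hab : ¬ (T.deleteEdges {s(p, q)}).Reachable a b) :
    (T.deleteEdges {s(p, q)} ⊔ edge a b).IsTree := by
  set D := T.deleteEdges {s(p, q)}
  have hside (z : V) : D.Reachable z p ∨ D.Reachable z q :=
    (hT.connected.preconnected z p).elim Walk.reachable_deleteEdges_start_or_end
  have hne : a ≠ b := fun h => hab (h ▸ .rfl)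
  have hab' : (D ⊔ edge a b).Reachable a b := Adj.reachable (by simp [edge_adj, hne])
  have hpq : (D ⊔ edge a b).Reachable p q := by
    have hmono {x y : V} (h : D.Reachable x y) : (D ⊔ edge a b).Reachable x y :=
      h.mono le_sup_left
    rcases hside a with ha | ha <;> rcases hside b with hb | hb
    · exact absurd (ha.trans hb.symm) hab
    · exact (hmono ha).symm.trans (hab'.trans (hmono hb))
    · exact (hmono hb).symm.trans (hab'.symm.trans (hmono ha))
    · exact absurd (ha.trans hb.symm) hab
  refine ⟨?_, (hT.isAcyclic.anti (deleteEdges_le _)).sup_edge_of_not_reachable hab⟩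
  refine (connected_iff_exists_forall_reachable _).mpr ⟨p, fun z => ?_⟩
  rcases hside z with h | h
  · exact (h.mono le_sup_left).symm
  · exact hpq.trans (h.mono le_sup_left).symm

theorem IsAcyclic.not_reachable_deleteEdges_of_mem_edges {G : SimpleGraph V} (hG : G.IsAcyclic)
    {a b : V} {P : G.Walk a b} (hP : P.IsPath) {e : Sym2 V} (he : e ∈ P.edges) :
    ¬ (G.deleteEdges {e}).Reachable a b := by
  classical
  rintro ⟨W⟩
  have hbypass : (W.mapLe (deleteEdges_le _)).bypass = P :=
    congrArg Subtype.val ((hG.subsingleton_path a b).elim ⟨_, Walk.bypass_isPath _⟩ ⟨P, hP⟩)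
  have heW : e ∈ W.edges := by
    rw [← Walk.edges_mapLe_eq_edges (deleteEdges_le {e})]
    exact Walk.edges_bypass_subset_edges _ (hbypass ▸ he)
  simpa using W.edges_subset_edgeSet heW

theorem Reachable.apply_eq_of_forall_adj {H : SimpleGraph V} {f : V → C}
    (hf : ∀ x y, H.Adj x y → f x = f y) {u v : V} (h : H.Reachable u v) : f u = f v := by
  simpa [Relation.reflTransGen_eq_self] using
    ((reachable_iff_reflTransGen u v).mp h).lift (p := Eq) f hf

theorem IsAcyclic.isTree_induce_fiber {H : SimpleGraph V} {f : V → C}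
    (hH : H.IsAcyclic) (hreach : ∀ u v, H.Reachable u v ↔ f u = f v) {v : V} :
    (H.induce {u | f u = f v}).IsTree := by
  have hsupp : {u | f u = f v} = (H.connectedComponentMk v).supp := by
    ext u; simp [ConnectedComponent.eq, hreach]
  rw [hsupp]
  exact hH.isTree_connectedComponent _

section Forest

variable [Fintype V] [DecidableEq V] [Fintype C] [DecidableEq C] {H : SimpleGraph V}
  [DecidableRel H.Adj] {f : V → C}

theorem card_edgeFinset_eq_sum_card_edgeFinset_induce_fiber
    (hf : ∀ u v, H.Adj u v → f u = f v) :
    #H.edgeFinset = ∑ c, #(H.induce ↑({v | f v = c} : Finset V)).edgeFinset := by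
  -- sort each edge by the colour of one endpoint; edges being monochromatic, either one will do
  rw [card_eq_sum_card_fiberwise (f := fun e => f (Quot.out e).1) (t := univ)
    fun _ _ => mem_univ _]
  refine sum_congr rfl fun c _ => ?_
  rw [← card_filter_edgeFinset_toFinset_subset]
  congr 1
  refine filter_congr fun e he => ?_
  induction e using Sym2.ind with
  | _ x y =>
    have hxy : f x = f y := hf x y (by simpa using he)
    have hout : f (Quot.out s(x, y)).1 = f x := by
      rcases Sym2.mem_iff.mp (Sym2.out_fst_mem s(x, y)) with h | h <;> rw [h]
      exact hxy.symm
    simp [hout, hxy, subset_iff]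

theorem IsAcyclic.card_edgeFinset_add_card_eq_of_reachable_iff (hH : H.IsAcyclic)
    (hsurj : Function.Surjective f) (hreach : ∀ u v, H.Reachable u v ↔ f u = f v) :
    #H.edgeFinset + Fintype.card C = Fintype.card V := by
  have hfiber (c : C) :
      #(H.induce ↑({v | f v = c} : Finset V)).edgeFinset + 1 = #({v | f v = c} : Finset V) := by
    obtain ⟨v, rfl⟩ := hsurj c
    have htree : (H.induce ↑({u | f u = f v} : Finset V)).IsTree := by
      rw [coe_filter_univ]
      exact hH.isTree_induce_fiber hreach
    simpa using htree.card_edgeFinset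
  have hf (u v : V) (h : H.Adj u v) : f u = f v := (hreach u v).mp h.reachable
  calc #H.edgeFinset + Fintype.card C
      = ∑ c, (#(H.induce ↑({v | f v = c} : Finset V)).edgeFinset + 1) := by
        rw [sum_add_distrib, ← card_edgeFinset_eq_sum_card_edgeFinset_induce_fiber hf,
          sum_const, card_univ, smul_eq_mul, mul_one]
    _ = ∑ c, #({v | f v = c} : Finset V) := sum_congr rfl fun c _ => hfiber c
    _ = Fintype.card V := (card_eq_sum_card_fiberwise fun _ _ => mem_univ _).symm

end Forest

theorem card_edgeFinset_deleteEdges_add_card_filter_mem [Fintype V] (H : SimpleGraph V)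
    [Fintype H.edgeSet] (s : Set (Sym2 V)) [DecidablePred (· ∈ s)]
    [Fintype (H.deleteEdges s).edgeSet] :
    #(H.deleteEdges s).edgeFinset + #{e ∈ H.edgeFinset | e ∈ s} = #H.edgeFinset := by
  have hdel : (H.deleteEdges s).edgeFinset = {e ∈ H.edgeFinset | e ∉ s} := by ext; simp
  rw [hdel, add_comm, card_filter_add_card_filter_not]

section Weight

variable [Finite V]

noncomputable def totalWeight (H : SimpleGraph V) (w : Sym2 V → ℝ) : ℝ :=
  ∑ e ∈ H.edgeSet.toFinite.toFinset, w e

structure IsMinSpanningTree (G T : SimpleGraph V) (w : Sym2 V → ℝ) : Prop where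
  le : T ≤ G
  isTree : T.IsTree
  totalWeight_le : ∀ T' ≤ G, T'.IsTree → T.totalWeight w ≤ T'.totalWeight w

variable {G T H : SimpleGraph V} {w : Sym2 V → ℝ}

theorem totalWeight_deleteEdges_singleton {e : Sym2 V} (he : e ∈ H.edgeSet) :
    (H.deleteEdges {e}).totalWeight w = H.totalWeight w - w e := by
  classical
  have hfin : (H.deleteEdges {e}).edgeSet.toFinite.toFinset
      = H.edgeSet.toFinite.toFinset.erase e := by
    ext; simp [and_comm]
  rw [totalWeight, hfin, sum_erase_eq_sub (by simpa using he), totalWeight]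

theorem totalWeight_sup_edge {a b : V} (hne : a ≠ b) (hab : s(a, b) ∉ H.edgeSet) :
    (H ⊔ edge a b).totalWeight w = H.totalWeight w + w s(a, b) := by
  classical
  have hfin : (H ⊔ edge a b).edgeSet.toFinite.toFinset
      = insert s(a, b) H.edgeSet.toFinite.toFinset := by
    ext; simp [edgeSet_edge_of_ne hne]
  rw [totalWeight, hfin, sum_insert (by simpa using hab), totalWeight, add_comm]

theorem IsMinSpanningTree.weight_le_of_not_reachable_deleteEdges (hT : G.IsMinSpanningTree T w)
    {p q a b : V} (hpq : T.Adj p q) (hab : G.Adj a b)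
    (hcut : ¬ (T.deleteEdges {s(p, q)}).Reachable a b) : w s(p, q) ≤ w s(a, b) := by
  have hle : T.deleteEdges {s(p, q)} ⊔ edge a b ≤ G :=
    sup_le ((deleteEdges_le _).trans hT.le) ((edge_le_iff _).mpr (.inr hab))
  have hmin := hT.totalWeight_le _ hle (hT.isTree.deleteEdges_sup_edge hcut)
  rw [totalWeight_sup_edge (H := T.deleteEdges _) hab.ne fun h => hcut (Adj.reachable h),
    totalWeight_deleteEdges_singleton hpq] at hmin
  linarith

theorem IsMinSpanningTree.weight_le_of_mem_edges (hT : G.IsMinSpanningTree T w) {a b : V}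
    (hab : G.Adj a b) {P : T.Walk a b} (hP : P.IsPath) {e : Sym2 V} (he : e ∈ P.edges) :
    w e ≤ w s(a, b) := by
  induction e using Sym2.ind with
  | _ p q =>
    exact hT.weight_le_of_not_reachable_deleteEdges (P.adj_of_mem_edges he) hab
      (hT.isTree.isAcyclic.not_reachable_deleteEdges_of_mem_edges hP he)

end Weight

section Clusters

def interClusterEdges (cluster : V → C) : Set (Sym2 V) :=
  {e | ∃ x z, e = s(x, z) ∧ cluster x ≠ cluster z}

variable {G T : SimpleGraph V} {f : V → C}

@[simp]
theorem mk_mem_interClusterEdges {x y : V} : s(x, y) ∈ interClusterEdges f ↔ f x ≠ f y := by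
  constructor
  · rintro ⟨u, v, he, hne⟩
    rcases Sym2.eq_iff.mp he with ⟨rfl, rfl⟩ | ⟨rfl, rfl⟩
    exacts [hne, hne.symm]
  · exact fun h => ⟨x, y, rfl, h⟩

variable [Finite V] {w : Sym2 V → ℝ}

theorem IsMinSpanningTree.reachable_deleteEdges_interClusterEdges
    (hT : G.IsMinSpanningTree T w)
    (hsep : ∀ u v x z : V, G.Adj u v → G.Adj x z → f u = f v → f x ≠ f z → w s(u, v) < w s(x, z))
    {a b : V} (hab : G.Adj a b) (hf : f a = f b) :
    (T.deleteEdges (interClusterEdges f)).Reachable a b := by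
  obtain ⟨P, hP⟩ := hT.isTree.connected.exists_isPath a b
  refine ⟨P.toDeleteEdges _ fun e he hinter => ?_⟩
  obtain ⟨x, z, rfl, hxz⟩ := hinter
  exact (hT.weight_le_of_mem_edges hab hP he).not_gt
    (hsep a b x z hab (hT.le (P.adj_of_mem_edges he)) hf hxz)

theorem IsMinSpanningTree.reachable_deleteEdges_interClusterEdges_iff
    (hT : G.IsMinSpanningTree T w)
    (hsep : ∀ u v x z : V, G.Adj u v → G.Adj x z → f u = f v → f x ≠ f z → w s(u, v) < w s(x, z))
    (hpre : ∀ c, (G.induce {v | f v = c}).Preconnected) {u v : V} :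
    (T.deleteEdges (interClusterEdges f)).Reachable u v ↔ f u = f v := by
  refine ⟨fun h => h.apply_eq_of_forall_adj fun x y hxy => ?_, fun huv => ?_⟩
  · simpa using (deleteEdges_adj.mp hxy).2
  have hind : (G.induce {x | f x = f v}).Reachable ⟨u, huv⟩ ⟨v, rfl⟩ := hpre _ _ _
  rw [reachable_iff_reflTransGen] at hind ⊢
  exact hind.lift' Subtype.val fun x y hxy => (reachable_iff_reflTransGen _ _).mp <|
    hT.reachable_deleteEdges_interClusterEdges hsep hxy (x.2.trans y.2.symm)

end Clusters

end SimpleGraph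

open Classical in
theorem mst_inter_cluster_edges_count_general
    {V C : Type*} [Fintype V] [DecidableEq V] [Fintype C] [DecidableEq C]
    (G : SimpleGraph V)
    (cluster : V → C) (hsurj : Function.Surjective cluster)
    (hcc : ∀ c : C, ((G.induce {v : V | cluster v = c}).Connected))
    (w : Sym2 V → ℝ)
    (hsep : ∀ u v x z : V, G.Adj u v → G.Adj x z →
      cluster u = cluster v → cluster x ≠ cluster z → w s(u, v) < w s(x, z))
    (T : SimpleGraph V) (hTsub : T ≤ G) (hTtree : T.IsTree)
    (hMST : ∀ T' : SimpleGraph V, T' ≤ G → T'.IsTree →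
      ∑ e ∈ T.edgeSet.toFinite.toFinset, w e ≤ ∑ e ∈ T'.edgeSet.toFinite.toFinset, w e) :
    (T.edgeSet.toFinite.toFinset.filter
        (fun e => ∃ u v : V, e = s(u, v) ∧ cluster u ≠ cluster v)).card
      = Fintype.card C - 1 ∧
    (∀ u v : V,
      (T.deleteEdges {e : Sym2 V | ∃ x z : V, e = s(x, z) ∧ cluster x ≠ cluster z}).Reachable u v
        ↔ cluster u = cluster v) := by
  classical
  have hT : G.IsMinSpanningTree T w := ⟨hTsub, hTtree, hMST⟩
  have hreach (u v : V) :
      (T.deleteEdges (interClusterEdges cluster)).Reachable u v ↔ cluster u = cluster v :=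
    hT.reachable_deleteEdges_interClusterEdges_iff hsep fun c => (hcc c).preconnected
  refine ⟨?_, hreach⟩
  have hacyc : (T.deleteEdges (interClusterEdges cluster)).IsAcyclic :=
    hTtree.isAcyclic.anti (deleteEdges_le _)
  have hforest := hacyc.card_edgeFinset_add_card_eq_of_reachable_iff hsurj hreach
  have htree := hTtree.card_edgeFinset
  have hsplit := card_edgeFinset_deleteEdges_add_card_filter_mem T (interClusterEdges cluster)
  have hinter : T.edgeSet.toFinite.toFinset.filter
      (fun e => ∃ u v : V, e = s(u, v) ∧ cluster u ≠ cluster v)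
        = {e ∈ T.edgeFinset | e ∈ interClusterEdges cluster} := by
    ext e
    simp only [mem_filter, Set.Finite.mem_toFinset, mem_edgeFinset]
    rfl
  rw [hinter]
  omega

open Classical in
/-- Under the weight-separation assumption (all intra-cluster edge weights strictly smaller
than all inter-cluster edge weights, each cluster inducing a connected subgraph), any
minimum spanning tree `T` of the connected graph `G` contains exactly `S - 1` inter-cluster
edges, where `S` is the number of clusters; moreover, removing the inter-cluster edges of
`T` disconnects it into exactly the clusters. -/
theorem mst_inter_cluster_edges_count
    {V C : Type*} [Fintype V] [DecidableEq V] [Fintype C] [DecidableEq C]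
    (G : SimpleGraph V) (hG : G.Connected)
    (cluster : V → C) (hsurj : Function.Surjective cluster)
    (hcc : ∀ c : C, ((G.induce {v : V | cluster v = c}).Connected))
    (w : Sym2 V → ℝ)
    (hdistinct : ∀ e₁ ∈ G.edgeSet, ∀ e₂ ∈ G.edgeSet, e₁ ≠ e₂ → w e₁ ≠ w e₂)
    (hsep : ∀ u v x z : V, G.Adj u v → G.Adj x z →
      cluster u = cluster v → cluster x ≠ cluster z → w s(u, v) < w s(x, z))
    (T : SimpleGraph V) (hTsub : T ≤ G) (hTtree : T.IsTree)
    (hMST : ∀ T' : SimpleGraph V, T' ≤ G → T'.IsTree →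
      ∑ e ∈ T.edgeSet.toFinite.toFinset, w e ≤ ∑ e ∈ T'.edgeSet.toFinite.toFinset, w e) :
    (T.edgeSet.toFinite.toFinset.filter
        (fun e => ∃ u v : V, e = s(u, v) ∧ cluster u ≠ cluster v)).card
      = Fintype.card C - 1 ∧
    (∀ u v : V,
      (T.deleteEdges {e : Sym2 V | ∃ x z : V, e = s(x, z) ∧ cluster x ≠ cluster z}).Reachable u v
        ↔ cluster u = cluster v) :=
  mst_inter_cluster_edges_count_general G cluster hsurj hcc w hsep T hTsub hTtree hMST
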